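/- arXiv:math/0607128 — 2 statements merged into one kernel-verified Lean document; each statement's English description precedes it below -/
import Mathlib

section
/- Let g : Y → X be a function between sets and define the pushforward g₊ : (functions Y → ℤ with finite support data) by (g₊φ)(p) := ∑_{classes} m_Z · χ(g⁻¹(p) ∩ Z) for φ = ∑ m_Z 𝟙_Z, where χ is any finitely additive 'Euler characteristic' measure on a Boolean algebra of subsets of Y (χ(A ⊔ B) = χ(A) + χ(B) for disjoint A, B in the algebra). Then g₊ is well-defined and additive: g₊(φ + ψ) = g₊(φ) + g₊(ψ). -/
open Finset

section Helpers
variable {Y : Type*} (B : Set (Set Y)) (χ : Set Y → ℤ)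

lemma chi_empty (h_empty : ∅ ∈ B)
    (hχadd : ∀ A A' : Set Y, A ∈ B → A' ∈ B → Disjoint A A' → χ (A ∪ A') = χ A + χ A') :
    χ ∅ = 0 := by
  have := hχadd ∅ ∅ h_empty h_empty disjoint_bot_left
  simp at this; linarith

lemma biUnion_mem (h_empty : ∅ ∈ B)
    (h_union : ∀ A A' : Set Y, A ∈ B → A' ∈ B → A ∪ A' ∈ B)
    {α : Type*} [DecidableEq α] (s : Finset α) (D : α → Set Y) (hD : ∀ a ∈ s, D a ∈ B) :
    (⋃ a ∈ s, D a) ∈ B := by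
  induction s using Finset.induction_on with
  | empty => simpa using h_empty
  | insert a s ha ih =>
      rw [Finset.set_biUnion_insert]
      exact h_union _ _ (hD _ (mem_insert_self _ _)) (ih fun a has => hD a (mem_insert_of_mem has))

lemma biInter_mem (h_empty : ∅ ∈ B)
    (h_inter : ∀ A A' : Set Y, A ∈ B → A' ∈ B → A ∩ A' ∈ B)
    (h_compl : ∀ A : Set Y, A ∈ B → Aᶜ ∈ B)
    {α : Type*} [DecidableEq α] (s : Finset α) (D : α → Set Y) (hD : ∀ a ∈ s, D a ∈ B) :
    (⋂ a ∈ s, D a) ∈ B := by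
  induction s using Finset.induction_on with
  | empty => simpa using (by simpa using h_compl ∅ h_empty : (Set.univ : Set Y) ∈ B)
  | insert a s ha ih =>
      rw [Finset.set_biInter_insert]
      exact h_inter _ _ (hD _ (mem_insert_self _ _)) (ih fun a has => hD a (mem_insert_of_mem has))

lemma chi_biUnion (h_empty : ∅ ∈ B)
    (h_union : ∀ A A' : Set Y, A ∈ B → A' ∈ B → A ∪ A' ∈ B)
    (hχadd : ∀ A A' : Set Y, A ∈ B → A' ∈ B → Disjoint A A' → χ (A ∪ A') = χ A + χ A')
    {α : Type*} [DecidableEq α] (s : Finset α) (D : α → Set Y) (hD : ∀ a ∈ s, D a ∈ B)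
    (hdisj : ∀ a ∈ s, ∀ b ∈ s, a ≠ b → Disjoint (D a) (D b)) :
    χ (⋃ a ∈ s, D a) = ∑ a ∈ s, χ (D a) := by
  induction s using Finset.induction_on with
  | empty => simpa using chi_empty B χ h_empty hχadd
  | @insert a s ha ih =>
      rw [Finset.set_biUnion_insert, Finset.sum_insert ha]
      have hU : (⋃ b ∈ s, D b) ∈ B :=
        biUnion_mem B h_empty h_union s D fun b hb => hD b (mem_insert_of_mem hb)
      have hdisjU : Disjoint (D a) (⋃ b ∈ s, D b) := by
        rw [Set.disjoint_left]
        intro y hy hy'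
        rw [Set.mem_iUnion₂] at hy'
        obtain ⟨b, hb, hyb⟩ := hy'
        exact (Set.disjoint_left.mp (hdisj a (mem_insert_self _ _) b (mem_insert_of_mem hb)
          (fun h => ha (h ▸ hb))) hy) hyb
      rw [hχadd _ _ (hD a (mem_insert_self _ _)) hU hdisjU,
        ih (fun b hb => hD b (mem_insert_of_mem hb))
          (fun b hb c hc hbc => hdisj b (mem_insert_of_mem hb) c (mem_insert_of_mem hc) hbc)]

/-- Key lemma: a ℤ-combination of indicators of sets in `B` that is identically zero
has zero total χ. -/
lemma zero_comb (h_empty : ∅ ∈ B)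
    (h_union : ∀ A A' : Set Y, A ∈ B → A' ∈ B → A ∪ A' ∈ B)
    (h_inter : ∀ A A' : Set Y, A ∈ B → A' ∈ B → A ∩ A' ∈ B)
    (h_compl : ∀ A : Set Y, A ∈ B → Aᶜ ∈ B)
    (hχadd : ∀ A A' : Set Y, A ∈ B → A' ∈ B → Disjoint A A' → χ (A ∪ A') = χ A + χ A')
    {ι : Type} [Fintype ι] (c : ι → ℤ) (C : ι → Set Y) (hC : ∀ i, C i ∈ B)
    (h0 : ∀ y, ∑ i, c i * Set.indicator (C i) (fun _ => (1 : ℤ)) y = 0) :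
    ∑ i, c i * χ (C i) = 0 := by
  classical
  -- atoms
  set atom : Finset ι → Set Y := fun S => {y | ∀ i, y ∈ C i ↔ i ∈ S} with hatom
  have hatomB : ∀ S, atom S ∈ B := by
    intro S
    have : atom S = ⋂ i ∈ (univ : Finset ι), (if i ∈ S then C i else (C i)ᶜ) := by
      ext y
      simp only [hatom, Set.mem_setOf_eq, Set.mem_iInter, mem_univ, forall_true_left]
      constructor
      · intro h i; by_cases hi : i ∈ S <;> simp [hi, (h i), Set.mem_compl_iff]
      · intro h i
        have := h i
        by_cases hi : i ∈ S <;> simp [hi] at this <;> simp [hi, this]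
    rw [this]
    exact biInter_mem B h_empty h_inter h_compl _ _ fun i _ => by
      by_cases hi : i ∈ S <;> simp [hi, hC i, h_compl _ (hC i)]
  have hatomdisj : ∀ S T : Finset ι, S ≠ T → Disjoint (atom S) (atom T) := by
    intro S T hST
    rw [Set.disjoint_left]
    intro y hyS hyT
    exact hST (Finset.ext fun i => ((hyS i).symm.trans (hyT i)))
  have hCeq : ∀ x, C x = ⋃ S ∈ (univ : Finset (Finset ι)).filter (fun S => x ∈ S), atom S := by
    intro x
    ext y
    simp only [Set.mem_iUnion₂, Finset.mem_filter, mem_univ, true_and]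
    constructor
    · intro hy
      refine ⟨(univ : Finset ι).filter (fun i => y ∈ C i), by simp [hy], fun i => by simp⟩
    · rintro ⟨S, hxS, hyS⟩
      exact (hyS x).mpr hxS
  have hchiC : ∀ x, χ (C x) = ∑ S ∈ (univ : Finset (Finset ι)).filter (fun S => x ∈ S), χ (atom S) := by
    intro x
    rw [hCeq x]
    exact chi_biUnion B χ h_empty h_union hχadd _ _ (fun S _ => hatomB S)
      (fun S _ T _ h => hatomdisj S T h)
  calc ∑ i, c i * χ (C i)
      = ∑ i, ∑ S ∈ (univ : Finset (Finset ι)).filter (fun S => i ∈ S), c i * χ (atom S) := by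
        simp_rw [hchiC, Finset.mul_sum]
    _ = ∑ i, ∑ S : Finset ι, if i ∈ S then c i * χ (atom S) else 0 := by
        simp_rw [Finset.sum_filter]
    _ = ∑ S : Finset ι, ∑ i, if i ∈ S then c i * χ (atom S) else 0 := Finset.sum_comm
    _ = ∑ S : Finset ι, (∑ i ∈ S, c i) * χ (atom S) := by
        refine Finset.sum_congr rfl fun S _ => ?_
        rw [Finset.sum_mul, Finset.sum_ite_mem, Finset.univ_inter]
    _ = 0 := by
        refine Finset.sum_eq_zero fun S _ => ?_
        rcases Set.eq_empty_or_nonempty (atom S) with h | ⟨y, hy⟩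
        · rw [h, chi_empty B χ h_empty hχadd, mul_zero]
        · have := h0 y
          have hval : ∀ i, Set.indicator (C i) (fun _ => (1:ℤ)) y = if i ∈ S then 1 else 0 := by
            intro i
            by_cases hi : i ∈ S <;> simp [Set.indicator_apply, hi, (hy i), hy]
          simp_rw [hval, mul_ite, mul_one, mul_zero, Finset.sum_ite_mem, Finset.univ_inter] at this
          rw [this, zero_mul]

end Helpers


/-- MacPherson's pushforward of constructible functions, `(g₊φ)(p) = ∑ m_Z χ(g⁻¹(p) ∩ Z)`
for `φ = ∑ m_Z 𝟙_Z`, is well-defined (independent of the chosen representation of `φ`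
as a combination of indicators of sets in the Boolean algebra `B`) and additive. -/
theorem pushforward_well_defined_and_additive {Y X : Type*} (g : Y → X)
    (B : Set (Set Y)) (χ : Set Y → ℤ)
    (h_empty : ∅ ∈ B)
    (h_union : ∀ A A' : Set Y, A ∈ B → A' ∈ B → A ∪ A' ∈ B)
    (h_inter : ∀ A A' : Set Y, A ∈ B → A' ∈ B → A ∩ A' ∈ B)
    (h_compl : ∀ A : Set Y, A ∈ B → Aᶜ ∈ B)
    (hχadd : ∀ A A' : Set Y, A ∈ B → A' ∈ B → Disjoint A A' → χ (A ∪ A') = χ A + χ A')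
    (hfib : ∀ (p : X) (Z : Set Y), Z ∈ B → g ⁻¹' {p} ∩ Z ∈ B) :
    -- well-definedness: two representations of the same constructible function
    -- have the same pushforward
    (∀ (ι κ : Type) [Fintype ι] [Fintype κ]
      (m : ι → ℤ) (Z : ι → Set Y) (n : κ → ℤ) (W : κ → Set Y),
      (∀ i, Z i ∈ B) → (∀ j, W j ∈ B) →
      (∑ i, m i • Set.indicator (Z i) (fun _ => (1 : ℤ)))
        = (∑ j, n j • Set.indicator (W j) (fun _ => (1 : ℤ))) →
      ∀ p : X, ∑ i, m i * χ (g ⁻¹' {p} ∩ Z i) = ∑ j, n j * χ (g ⁻¹' {p} ∩ W j)) ∧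
    -- additivity: the pushforward of a sum of representations is the sum of pushforwards
    (∀ (ι κ : Type) [Fintype ι] [Fintype κ]
      (m : ι → ℤ) (Z : ι → Set Y) (n : κ → ℤ) (W : κ → Set Y) (p : X),
      ∑ x : ι ⊕ κ, Sum.elim m n x * χ (g ⁻¹' {p} ∩ Sum.elim Z W x)
        = (∑ i, m i * χ (g ⁻¹' {p} ∩ Z i)) + ∑ j, n j * χ (g ⁻¹' {p} ∩ W j)) := by
  constructor
  · intro ι κ _ _ m Z n W hZ hW hrep p
    set F := g ⁻¹' {p} with hF
    set c : ι ⊕ κ → ℤ := Sum.elim m (fun j => -n j) with hc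
    set C : ι ⊕ κ → Set Y := Sum.elim (fun i => F ∩ Z i) (fun j => F ∩ W j) with hC
    have key : ∑ x, c x * χ (C x) = 0 := by
      refine zero_comb B χ h_empty h_union h_inter h_compl hχadd c C ?_ ?_
      · rintro (i | j)
        · exact hfib p _ (hZ i)
        · exact hfib p _ (hW j)
      · intro y
        rw [Fintype.sum_sum_type]
        simp only [hc, hC, Sum.elim_inl, Sum.elim_inr]
        by_cases hyF : y ∈ F
        · have hind : ∀ A : Set Y, Set.indicator (F ∩ A) (fun _ => (1:ℤ)) y
              = Set.indicator A (fun _ => (1:ℤ)) y := by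
            intro A; by_cases hyA : y ∈ A <;> simp [Set.indicator_apply, hyF, hyA]
          simp only [hind]
          have := congrFun hrep y
          simp only [Finset.sum_apply, Pi.smul_apply, smul_eq_mul] at this
          simp only [neg_mul, Finset.sum_neg_distrib]
          linarith [this]
        · have hind : ∀ A : Set Y, Set.indicator (F ∩ A) (fun _ => (1:ℤ)) y = 0 := by
            intro A; exact Set.indicator_of_notMem (fun h => hyF h.1) _
          simp [hind]
    rw [Fintype.sum_sum_type] at key
    simp only [hc, hC, Sum.elim_inl, Sum.elim_inr, neg_mul] at key
    simp only [Finset.sum_neg_distrib] at key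
    linarith [key]
  · intro ι κ _ _ m Z n W p
    rw [Fintype.sum_sum_type]
    simp
end

section
/- In the setting of the uniqueness criterion, the contribution of the open stratum satisfies c̃(T, Y) = ∑_{I ⊆ J} (-1)^{|I|} ι_{I*}(c̃(D_I)), where c̃(D_I) ∈ A(D_I) is the total class of the complete smooth variety D_I and ι_I : D_I → Y the (proper) inclusion. Consequently c̃(T, Y) depends only on the values of c̃ on the complete smooth varieties D_I. -/
open Finset

/-- Möbius inversion at the bottom of the Boolean lattice of subsets of `J`. -/
theorem Finset.sum_neg_one_pow_card_smul_sum_superset {J M : Type*} [Fintype J] [DecidableEq J]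
    [AddCommGroup M] (f : Finset J → M) :
    ∑ I : Finset J, (-1 : ℤ) ^ #I • ∑ K ∈ univ.filter (I ⊆ ·), f K = f ∅ := by
  calc ∑ I : Finset J, (-1 : ℤ) ^ #I • ∑ K ∈ univ.filter (I ⊆ ·), f K
      = ∑ K : Finset J, ∑ I ∈ K.powerset, (-1 : ℤ) ^ #I • f K := by
        simp_rw [smul_sum]
        exact sum_comm' fun I K => by simp
    _ = ∑ K : Finset J, (if K = ∅ then (1 : ℤ) else 0) • f K := by
        simp_rw [← sum_smul, sum_powerset_neg_one_pow_card]
    _ = f ∅ := by simp [ite_smul]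

/-- In the setting of the uniqueness criterion, the contribution of the open stratum
`T = D_∅°` satisfies `c̃(T,Y) = ∑_{I ⊆ J} (-1)^{|I|} ι_{I*}(c̃(D_I))`, where `c̃(D_I)` is
the total class of the complete smooth variety `D_I = ⋂_{j ∈ I} D j` and `ι_I : D_I → Y`
is the inclusion; thus `c̃(T,Y)` depends only on the values of `c̃` on the `D_I`. -/
theorem open_stratum_alternating_sum
    (A : Type → Type) [∀ X, AddCommGroup (A X)]
    (push : ∀ {X' Y' : Type}, (X' → Y') → (A X' →+ A Y'))
    (Y : Type) {J : Type} [Fintype J] [DecidableEq J] (D : J → Set Y)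
    (ct : ∀ X : Type, Set X → A X)
    (ctTot : ∀ X : Type, A X)
    -- local determination along the inclusions `ι_I : D_I → Y` for `K ⊇ I`
    (hloc : ∀ I K : Finset J, I ⊆ K →
      ct Y {y | ∀ j, y ∈ D j ↔ j ∈ K}
        = push (Subtype.val : {y : Y // ∀ j ∈ I, y ∈ D j} → Y)
            (ct {y : Y // ∀ j ∈ I, y ∈ D j}
              (Subtype.val ⁻¹' ({y | ∀ j, y ∈ D j ↔ j ∈ K} : Set Y))))
    -- the total class of `D_I` is the sum of the contributions of its strata `D_K°`
    (htot : ∀ I : Finset J,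
      ctTot {y : Y // ∀ j ∈ I, y ∈ D j}
        = ∑ K ∈ Finset.univ.filter (fun K : Finset J => I ⊆ K),
            ct {y : Y // ∀ j ∈ I, y ∈ D j}
              (Subtype.val ⁻¹' ({y | ∀ j, y ∈ D j ↔ j ∈ K} : Set Y))) :
    ct Y {y | ∀ j, y ∈ D j ↔ j ∈ (∅ : Finset J)}
      = ∑ I : Finset J, (-1 : ℤ) ^ I.card •
          push (Subtype.val : {y : Y // ∀ j ∈ I, y ∈ D j} → Y)
            (ctTot {y : Y // ∀ j ∈ I, y ∈ D j}) := by
  have push_tot : ∀ I : Finset J,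
      push (Subtype.val : {y : Y // ∀ j ∈ I, y ∈ D j} → Y) (ctTot {y : Y // ∀ j ∈ I, y ∈ D j})
        = ∑ K ∈ univ.filter (I ⊆ ·), ct Y {y | ∀ j, y ∈ D j ↔ j ∈ K} := fun I => by
    rw [htot I, map_sum]
    exact sum_congr rfl fun K hK => (hloc I K (mem_filter.mp hK).2).symm
  simp_rw [push_tot]
  exact (sum_neg_one_pow_card_smul_sum_superset fun K => ct Y {y | ∀ j, y ∈ D j ↔ j ∈ K}).symm
end
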